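/- arXiv:0711.2809 — 2 statements merged into one kernel-verified Lean document; each statement's English description precedes it below -/
import Mathlib

section
/- For each k = 1,...,n_j(ψ)−1, the Ad(a_j)-eigenspace g[a_j]^k = {z | Ad(a_j)z = ω^k z} equals g_{kβ[j]} + g_{(k−n_j(ψ))β[j]} and is an irreducible module under the adjoint action of g^{a_j}; moreover for p, q, r ∈ {1,...,n_j(ψ)−1} with r ≡ p+q mod n_j(ψ), one has [g[a_j]^p, g[a_j]^q] = g[a_j]^r. -/
open LieAlgebra Complex

variable {g : Type*} [LieRing g] [LieAlgebra ℂ g] [Module.Finite ℂ g]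

/-- The span of all brackets `⁅u, v⁆` with `u ∈ U`, `v ∈ V`. -/
def bracketSpan (U V : Submodule ℂ g) : Submodule ℂ g :=
  Submodule.span ℂ {z : g | ∃ u ∈ U, ∃ v ∈ V, z = ⁅u, v⁆}

/-- `W` is an irreducible module under the adjoint action of the subspace `S ⊆ g`. -/
def IsIrreducibleUnder (S W : Submodule ℂ g) : Prop :=
  W ≠ ⊥ ∧ (∀ u ∈ S, ∀ w ∈ W, ⁅u, w⁆ ∈ W) ∧
    ∀ U : Submodule ℂ g, U ≤ W → (∀ u ∈ S, ∀ w ∈ U, ⁅u, w⁆ ∈ U) → U = ⊥ ∨ U = W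

/-- Terms of a finite sum equal to zero, with terms in independent submodules, all vanish. -/
lemma aux_indep_sum_eq_zero {M : Type*} [AddCommGroup M] [Module ℂ M] {ι : Type*}
    [DecidableEq ι] {p : ι → Submodule ℂ M} (hind : iSupIndep p) (s : Finset ι) (F : ι → M)
    (hF : ∀ i, F i ∈ p i) (hsum : ∑ i ∈ s, F i = 0) : ∀ i ∈ s, F i = 0 := by
  intro i hi
  have hdis : Disjoint (p i) (⨆ j, ⨆ (_ : j ≠ i), p j) := iSupIndep_def.mp hind i
  have h2 : F i ∈ ⨆ j, ⨆ (_ : j ≠ i), p j := by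
    have hrepr : F i = - ∑ j ∈ s.erase i, F j := by
      have h := Finset.add_sum_erase s F hi
      rw [hsum] at h
      exact eq_neg_of_add_eq_zero_left h
    rw [hrepr]
    refine neg_mem (Submodule.sum_mem _ fun j hj => ?_)
    have hne : j ≠ i := (Finset.mem_erase.mp hj).1
    exact Submodule.mem_iSup_of_mem j (Submodule.mem_iSup_of_mem hne (hF j))
  exact Submodule.disjoint_def.mp hdis (F i) (hF i) h2

/-- Monotonicity of `bracketSpan`. -/
lemma bracketSpan_mono {U U' V V' : Submodule ℂ g} (hU : U ≤ U') (hV : V ≤ V') :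
    bracketSpan U V ≤ bracketSpan U' V' := by
  apply Submodule.span_mono
  rintro z ⟨u, hu, v, hv, rfl⟩
  exact ⟨u, hU hu, v, hV hv, rfl⟩

set_option maxHeartbeats 1000000 in
/-- Let `a_j = exp(2πi x_j/n_j(ψ))`, `N = n_j(ψ)`,
`ω = e^{2πi/N}`, `A = Ad(a_j)`, and `g_{kβ[j]} = {z | ⁅x_j, z⁆ = k z}`.  For each
`k = 1, …, N-1` the `Ad(a_j)`-eigenspace `g[a_j]^k = {z | A z = ω^k z}` equals
`g_{kβ[j]} + g_{(k-N)β[j]}` and is irreducible under the adjoint action of the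
fixed-point subalgebra `g^{a_j} = {z | A z = z}`; moreover for
`p, q, r ∈ {1, …, N-1}` with `r ≡ p + q mod N` one has
`[g[a_j]^p, g[a_j]^q] = g[a_j]^r`. -/
theorem ad_eigenspaces_irreducible_and_bracket [LieAlgebra.IsSimple ℂ g]
    (x : g) (N : ℕ) (hN : 0 < N)
    (hdiag : ⨆ k : ℤ, Module.End.eigenspace (LieAlgebra.ad ℂ g x) (k : ℂ) = ⊤)
    (hbound : ∀ k : ℤ,
      Module.End.eigenspace (LieAlgebra.ad ℂ g x) (k : ℂ) ≠ ⊥ → |k| ≤ (N : ℤ))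
    -- known irreducibility of each `g_{kβ[j]}` under `m[j] = g^x`
    (hirr : ∀ k : ℤ, k ≠ 0 → |k| ≤ (N : ℤ) →
      IsIrreducibleUnder (Module.End.eigenspace (LieAlgebra.ad ℂ g x) 0)
        (Module.End.eigenspace (LieAlgebra.ad ℂ g x) (k : ℂ)))
    -- known bracket relations `[g_{pβ[j]}, g_{qβ[j]}] = g_{(p+q)β[j]}`
    (hbr : ∀ p q : ℤ, p ≠ 0 → q ≠ 0 → p + q ≠ 0 →
      |p| ≤ (N : ℤ) → |q| ≤ (N : ℤ) → |p + q| ≤ (N : ℤ) →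
      bracketSpan (Module.End.eigenspace (LieAlgebra.ad ℂ g x) (p : ℂ))
          (Module.End.eigenspace (LieAlgebra.ad ℂ g x) (q : ℂ)) =
        Module.End.eigenspace (LieAlgebra.ad ℂ g x) ((p + q : ℤ) : ℂ))
    -- `A = Ad(a_j)` for `a_j = exp(2πi x / N)`
    (A : Module.End ℂ g)
    (hAlie : ∀ z w : g, A ⁅z, w⁆ = ⁅A z, A w⁆)
    (hA : ∀ (c : ℂ) (z : g), ⁅x, z⁆ = c • z →
      A z = Complex.exp (2 * Real.pi * Complex.I * c / N) • z) :
    (∀ k : ℕ, 1 ≤ k → k ≤ N - 1 →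
      Module.End.eigenspace A (Complex.exp (2 * Real.pi * Complex.I / N) ^ k) =
        Module.End.eigenspace (LieAlgebra.ad ℂ g x) (k : ℂ) ⊔
          Module.End.eigenspace (LieAlgebra.ad ℂ g x) (((k : ℤ) - N : ℤ) : ℂ) ∧
      IsIrreducibleUnder (Module.End.eigenspace A 1)
        (Module.End.eigenspace A (Complex.exp (2 * Real.pi * Complex.I / N) ^ k))) ∧
    (∀ p q r : ℕ, 1 ≤ p → p ≤ N - 1 → 1 ≤ q → q ≤ N - 1 → 1 ≤ r → r ≤ N - 1 →
      (r : ℤ) ≡ (p : ℤ) + (q : ℤ) [ZMOD (N : ℤ)] →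
      bracketSpan
          (Module.End.eigenspace A (Complex.exp (2 * Real.pi * Complex.I / N) ^ p))
          (Module.End.eigenspace A (Complex.exp (2 * Real.pi * Complex.I / N) ^ q)) =
        Module.End.eigenspace A (Complex.exp (2 * Real.pi * Complex.I / N) ^ r)) := by
  classical
  have hNz : (N : ℂ) ≠ 0 := Nat.cast_ne_zero.mpr hN.ne'
  have hNpos : (0 : ℤ) < (N : ℤ) := by exact_mod_cast hN
  set ω : ℂ := Complex.exp (2 * Real.pi * Complex.I / N) with hωdef
  have hprim : IsPrimitiveRoot ω N := Complex.isPrimitiveRoot_exp N hN.ne'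
  have hω0 : ω ≠ 0 := Complex.exp_ne_zero _
  -- basic exp identities
  have hexp : ∀ c : ℤ, Complex.exp (2 * Real.pi * Complex.I * (c : ℂ) / N) = ω ^ c := by
    intro c
    rw [hωdef, ← Complex.exp_int_mul]
    congr 1
    ring
  have hmodeq : ∀ c d : ℤ, c ≡ d [ZMOD (N : ℤ)] → ω ^ c = ω ^ d := by
    intro c d h
    have h1 : ω ^ (c - d) = 1 :=
      (hprim.zpow_eq_one_iff_dvd _).mpr h.symm.dvd
    calc ω ^ c = ω ^ (c - d + d) := by rw [sub_add_cancel]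
      _ = ω ^ (c - d) * ω ^ d := by rw [zpow_add₀ hω0]
      _ = ω ^ d := by rw [h1, one_mul]
  have hmZ : ∀ a b : ℤ, (N : ℤ) ∣ b - a → a ≡ b [ZMOD (N : ℤ)] := fun a b h =>
    Int.modEq_iff_dvd.mpr h
  -- membership characterization
  have hmemW : ∀ (c : ℂ) (w : g),
      w ∈ Module.End.eigenspace (LieAlgebra.ad ℂ g x) c ↔ ⁅x, w⁆ = c • w := by
    intro c w
    rw [Module.End.mem_eigenspace_iff, LieAlgebra.ad_apply]
  -- the ad-eigenspaces sit in A-eigenspaces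
  have Wle : ∀ c : ℤ, Module.End.eigenspace (LieAlgebra.ad ℂ g x) (c : ℂ) ≤
      Module.End.eigenspace A (ω ^ c) := by
    intro c z hz
    rw [hmemW] at hz
    rw [Module.End.mem_eigenspace_iff, hA (c : ℂ) z hz, hexp c]
  have Wle' : ∀ (c : ℤ) (m : ℕ), c ≡ (m : ℤ) [ZMOD (N : ℤ)] →
      Module.End.eigenspace (LieAlgebra.ad ℂ g x) (c : ℂ) ≤
        Module.End.eigenspace A (ω ^ m) := by
    intro c m h
    have h2 := Wle c
    rwa [hmodeq c m h, zpow_natCast] at h2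
  have hWbot : ∀ c : ℤ, (N : ℤ) < |c| →
      Module.End.eigenspace (LieAlgebra.ad ℂ g x) (c : ℂ) = ⊥ := by
    intro c hc
    by_contra hb
    exact absurd (hbound c hb) (by omega)
  have hx0 : x ∈ Module.End.eigenspace (LieAlgebra.ad ℂ g x) 0 := by
    rw [hmemW]; simp
  have h0le : Module.End.eigenspace (LieAlgebra.ad ℂ g x) 0 ≤
      Module.End.eigenspace A 1 := by
    have h2 := Wle' 0 0 (Int.ModEq.refl 0)
    simpa using h2
  have hxA1 : x ∈ Module.End.eigenspace A 1 := h0le hx0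
  -- brackets of A-eigenvectors
  have hbrA : ∀ (μ ν : ℂ) (u v : g), u ∈ Module.End.eigenspace A μ →
      v ∈ Module.End.eigenspace A ν → ⁅u, v⁆ ∈ Module.End.eigenspace A (μ * ν) := by
    intro μ ν u v hu hv
    rw [Module.End.mem_eigenspace_iff] at hu hv ⊢
    rw [hAlie, hu, hv, smul_lie, lie_smul, smul_smul]
  have hspanA : ∀ μ ν : ℂ, bracketSpan (Module.End.eigenspace A μ)
      (Module.End.eigenspace A ν) ≤ Module.End.eigenspace A (μ * ν) := by
    intro μ ν
    rw [bracketSpan, Submodule.span_le]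
    rintro z ⟨u, hu, v, hv, rfl⟩
    exact hbrA μ ν u v hu hv
  -- independence of the integer ad-eigenspaces
  have hind : iSupIndep (fun c : ℤ =>
      Module.End.eigenspace (LieAlgebra.ad ℂ g x) (c : ℂ)) :=
    (Module.End.eigenspaces_iSupIndep (LieAlgebra.ad ℂ g x)).comp
      (fun a b h => by exact_mod_cast h)
  -- the main decomposition
  have hdec : ∀ c : ℤ, 1 ≤ c → c ≤ (N : ℤ) - 1 →
      Module.End.eigenspace A (ω ^ c) =
        Module.End.eigenspace (LieAlgebra.ad ℂ g x) (c : ℂ) ⊔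
          Module.End.eigenspace (LieAlgebra.ad ℂ g x) ((c - N : ℤ) : ℂ) := by
    intro c hc1 hc2
    apply le_antisymm
    · intro z hz
      rw [Module.End.mem_eigenspace_iff] at hz
      have hztop : z ∈ ⨆ k : ℤ, Module.End.eigenspace (LieAlgebra.ad ℂ g x) (k : ℂ) := by
        rw [hdiag]; exact Submodule.mem_top
      obtain ⟨f, hf, hsum⟩ := (Submodule.mem_iSup_iff_exists_finsupp _ _).mp hztop
      have hsum' : ∑ d ∈ f.support, f d = z := hsum
      have hAfd : ∀ d : ℤ, A (f d) = ω ^ d • f d := by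
        intro d
        have h2 := (hmemW _ _).mp (hf d)
        rw [hA _ _ h2, hexp d]
      have hAz : A z = ∑ d ∈ f.support, ω ^ d • f d := by
        rw [← hsum', map_sum]
        exact Finset.sum_congr rfl fun d _ => hAfd d
      have hzero : ∑ d ∈ f.support, ((ω ^ d - ω ^ c) • f d) = 0 := by
        have h1 : (∑ d ∈ f.support, ω ^ d • f d) - ω ^ c • ∑ d ∈ f.support, f d = 0 := by
          rw [← hAz, hsum', hz, sub_self]
        rw [Finset.smul_sum, ← Finset.sum_sub_distrib] at h1
        simpa [sub_smul] using h1
      have hterm := aux_indep_sum_eq_zero hind f.support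
        (fun d => (ω ^ d - ω ^ c) • f d)
        (fun d => Submodule.smul_mem _ _ (hf d)) hzero
      rw [← hsum']
      apply Submodule.sum_mem
      intro d hd
      by_cases hdc : ω ^ d = ω ^ c
      · by_cases hb : |d| ≤ (N : ℤ)
        · have hdvd : (N : ℤ) ∣ d - c := by
            have h3 : ω ^ (d - c) = 1 := by
              rw [zpow_sub₀ hω0, hdc, div_self (zpow_ne_zero _ hω0)]
            exact (hprim.zpow_eq_one_iff_dvd _).mp h3
          obtain ⟨m, hm⟩ := hdvd
          have hm0 : m = 0 ∨ m = -1 := by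
            rcases abs_le.mp hb with ⟨hb1, hb2⟩
            have hlow : -(2 * (N : ℤ)) < N * m := by omega
            have hhigh : (N : ℤ) * m < N := by omega
            have h4 : -2 < m := by nlinarith
            have h5 : m < 1 := by nlinarith
            omega
          rcases hm0 with rfl | rfl
          · have hdc' : d = c := by omega
            subst hdc'
            exact Submodule.mem_sup_left (hf d)
          · have hdc' : d = c - N := by omega
            exact Submodule.mem_sup_right (by rw [← hdc']; exact hf d)
        · have hbot := hWbot d (by omega)
          have h6 := hf d
          rw [hbot, Submodule.mem_bot] at h6
          rw [h6]
          exact Submodule.zero_mem _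
      · have h0 := hterm d hd
        have hfd0 : f d = 0 := by
          rcases smul_eq_zero.mp h0 with h | h
          · exact absurd (sub_eq_zero.mp h) hdc
          · exact h
        rw [hfd0]
        exact Submodule.zero_mem _
    · apply sup_le
      · exact Wle c
      · have h2 := Wle (c - N)
        rwa [hmodeq (c - N) c (hmZ _ _ ⟨1, by ring⟩)] at h2
  have hW1 : ∀ c : ℤ, c ≡ 0 [ZMOD (N : ℤ)] →
      Module.End.eigenspace (LieAlgebra.ad ℂ g x) (c : ℂ) ≤
        Module.End.eigenspace A 1 := by
    intro c hc
    have h2 := Wle' c 0 (by exact_mod_cast hc)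
    simpa using h2
  refine ⟨fun k hk1 hk2 => ?_, fun p q r hp1 hp2 hq1 hq2 hr1 hr2 hmod => ?_⟩
  · have hk1' : (1 : ℤ) ≤ (k : ℤ) := by omega
    have hk2' : (k : ℤ) ≤ (N : ℤ) - 1 := by omega
    have Heq := hdec (k : ℤ) hk1' hk2'
    rw [zpow_natCast] at Heq
    have hkz0 : (k : ℤ) ≠ 0 := by omega
    have hkzb : |(k : ℤ)| ≤ (N : ℤ) := abs_le.mpr ⟨by omega, by omega⟩
    have hkN0 : (k : ℤ) - N ≠ 0 := by omega
    have hkNb : |(k : ℤ) - N| ≤ (N : ℤ) := abs_le.mpr ⟨by omega, by omega⟩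
    constructor
    · rw [Heq]
      norm_cast
    · refine ⟨?_, ?_, ?_⟩
      · intro hbotE
        have hne := (hirr (k : ℤ) hkz0 hkzb).1
        apply hne
        rw [eq_bot_iff, ← hbotE]
        have h2 := Wle' (k : ℤ) k (Int.ModEq.refl _)
        exact h2
      · intro u hu w hw
        have h2 := hbrA 1 (ω ^ k) u w hu hw
        rwa [one_mul] at h2
      · intro U hUle hUinv
        -- splitting elements of U into their two ad-eigencomponents
        have hsplit : ∀ z ∈ U,
            ∃ z₁ ∈ Module.End.eigenspace (LieAlgebra.ad ℂ g x) ((k : ℤ) : ℂ) ⊓ U,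
            ∃ z₂ ∈ Module.End.eigenspace (LieAlgebra.ad ℂ g x) (((k : ℤ) - N : ℤ) : ℂ) ⊓ U,
              z₁ + z₂ = z := by
          intro z hzU
          have hzE : z ∈ Module.End.eigenspace (LieAlgebra.ad ℂ g x) ((k : ℤ) : ℂ) ⊔
              Module.End.eigenspace (LieAlgebra.ad ℂ g x) (((k : ℤ) - N : ℤ) : ℂ) := by
            rw [← Heq]; exact hUle hzU
          obtain ⟨y, hy, w, hw, hyw⟩ := Submodule.mem_sup.mp hzE
          have hyb : ⁅x, y⁆ = ((k : ℤ) : ℂ) • y := (hmemW _ _).mp hy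
          have hwb : ⁅x, w⁆ = (((k : ℤ) - N : ℤ) : ℂ) • w := (hmemW _ _).mp hw
          have hbz : ⁅x, z⁆ ∈ U := hUinv x hxA1 z hzU
          have hNy : (N : ℂ) • y = ⁅x, z⁆ - ((((k : ℤ) - N : ℤ)) : ℂ) • z := by
            rw [← hyw, lie_add, hyb, hwb]
            push_cast
            module
          have hyU : y ∈ U := by
            have h1 : (N : ℂ) • y ∈ U := by
              rw [hNy]; exact U.sub_mem hbz (U.smul_mem _ hzU)
            have h2 := U.smul_mem ((N : ℂ))⁻¹ h1
            rwa [inv_smul_smul₀ hNz] at h2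
          have hwU : w ∈ U := by
            have h3 : w = z - y := by rw [← hyw]; abel
            rw [h3]; exact U.sub_mem hzU hyU
          exact ⟨y, ⟨hy, hyU⟩, w, ⟨hw, hwU⟩, hyw⟩
        -- invariance of the two intersections under the zero eigenspace
        have hU1inv : ∀ u ∈ Module.End.eigenspace (LieAlgebra.ad ℂ g x) 0,
            ∀ w ∈ Module.End.eigenspace (LieAlgebra.ad ℂ g x) ((k : ℤ) : ℂ) ⊓ U,
            ⁅u, w⁆ ∈ Module.End.eigenspace (LieAlgebra.ad ℂ g x) ((k : ℤ) : ℂ) ⊓ U :=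
          fun u hu w hw =>
            ⟨(hirr (k : ℤ) hkz0 hkzb).2.1 u hu w hw.1, hUinv u (h0le hu) w hw.2⟩
        have hU2inv : ∀ u ∈ Module.End.eigenspace (LieAlgebra.ad ℂ g x) 0,
            ∀ w ∈ Module.End.eigenspace (LieAlgebra.ad ℂ g x) (((k : ℤ) - N : ℤ) : ℂ) ⊓ U,
            ⁅u, w⁆ ∈ Module.End.eigenspace (LieAlgebra.ad ℂ g x) (((k : ℤ) - N : ℤ) : ℂ) ⊓ U :=
          fun u hu w hw =>
            ⟨(hirr ((k : ℤ) - N) hkN0 hkNb).2.1 u hu w hw.1, hUinv u (h0le hu) w hw.2⟩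
        -- if one full component is inside U then U is everything
        have hcase1 : Module.End.eigenspace (LieAlgebra.ad ℂ g x) ((k : ℤ) : ℂ) ≤ U →
            U = Module.End.eigenspace A (ω ^ k) := by
          intro hle
          have hb1 := hbr (-(N : ℤ)) (k : ℤ) (by omega) hkz0 (by omega)
            (abs_le.mpr ⟨by omega, by omega⟩) hkzb (abs_le.mpr ⟨by omega, by omega⟩)
          rw [show -(N : ℤ) + (k : ℤ) = (k : ℤ) - N from by ring] at hb1
          have hsub : bracketSpan
              (Module.End.eigenspace (LieAlgebra.ad ℂ g x) (Int.cast (-(N : ℤ)) : ℂ))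
              (Module.End.eigenspace (LieAlgebra.ad ℂ g x) ((k : ℤ) : ℂ)) ≤ U := by
            rw [bracketSpan, Submodule.span_le]
            rintro _ ⟨u, hu, v, hv, rfl⟩
            exact hUinv u (hW1 (-(N : ℤ)) (hmZ _ _ ⟨1, by ring⟩) hu) v (hle hv)
          rw [hb1] at hsub
          apply le_antisymm hUle
          rw [Heq]
          exact sup_le hle hsub
        have hcase2 :
            Module.End.eigenspace (LieAlgebra.ad ℂ g x) (((k : ℤ) - N : ℤ) : ℂ) ≤ U →
            U = Module.End.eigenspace A (ω ^ k) := by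
          intro hle
          have hb1 := hbr (N : ℤ) ((k : ℤ) - N) (by omega) hkN0 (by omega)
            (abs_le.mpr ⟨by omega, by omega⟩) hkNb (abs_le.mpr ⟨by omega, by omega⟩)
          rw [show (N : ℤ) + ((k : ℤ) - N) = (k : ℤ) from by ring] at hb1
          have hsub : bracketSpan
              (Module.End.eigenspace (LieAlgebra.ad ℂ g x) (Int.cast ((N : ℤ)) : ℂ))
              (Module.End.eigenspace (LieAlgebra.ad ℂ g x) (((k : ℤ) - N : ℤ) : ℂ)) ≤ U := by
            rw [bracketSpan, Submodule.span_le]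
            rintro _ ⟨u, hu, v, hv, rfl⟩
            exact hUinv u (hW1 (N : ℤ) (hmZ _ _ ⟨-1, by ring⟩) hu) v (hle hv)
          rw [hb1] at hsub
          apply le_antisymm hUle
          rw [Heq]
          exact sup_le hsub hle
        rcases (hirr (k : ℤ) hkz0 hkzb).2.2 _ inf_le_left hU1inv with h1 | h1
        · rcases (hirr ((k : ℤ) - N) hkN0 hkNb).2.2 _ inf_le_left hU2inv with h2 | h2
          · left
            rw [eq_bot_iff]
            intro z hz
            obtain ⟨z₁, hz₁, z₂, hz₂, hzz⟩ := hsplit z hz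
            rw [h1] at hz₁
            rw [h2] at hz₂
            rw [Submodule.mem_bot] at hz₁ hz₂
            rw [Submodule.mem_bot, ← hzz, hz₁, hz₂, add_zero]
          · exact Or.inr (hcase2 (by rw [← h2]; exact inf_le_right))
        · exact Or.inr (hcase1 (by rw [← h1]; exact inf_le_right))
  · -- the bracket relations
    have hr1' : (1 : ℤ) ≤ (r : ℤ) := by omega
    have hr2' : (r : ℤ) ≤ (N : ℤ) - 1 := by omega
    obtain ⟨m, hm⟩ : (N : ℤ) ∣ ((p : ℤ) + (q : ℤ)) - (r : ℤ) := hmod.dvd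
    have hm0 : m = 0 ∨ m = 1 := by
      have hlow : -((N : ℤ)) < N * m := by omega
      have hhigh : (N : ℤ) * m < 2 * N := by omega
      have h4 : (-1 : ℤ) < m := by nlinarith
      have h5 : m < 2 := by nlinarith
      omega
    apply le_antisymm
    · have h := hspanA (ω ^ p) (ω ^ q)
      have hpq : ω ^ p * ω ^ q = ω ^ r := by
        rw [← zpow_natCast ω p, ← zpow_natCast ω q, ← zpow_natCast ω r, ← zpow_add₀ hω0]
        exact hmodeq _ _ hmod.symm
      rwa [hpq] at h
    · rw [show Module.End.eigenspace A (ω ^ r) =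
          Module.End.eigenspace (LieAlgebra.ad ℂ g x) ((r : ℤ) : ℂ) ⊔
            Module.End.eigenspace (LieAlgebra.ad ℂ g x) (((r : ℤ) - N : ℤ) : ℂ) from by
        rw [← zpow_natCast ω r]; exact hdec (r : ℤ) hr1' hr2']
      have hWpA : Module.End.eigenspace (LieAlgebra.ad ℂ g x) ((p : ℤ) : ℂ) ≤
          Module.End.eigenspace A (ω ^ p) := Wle' _ p (Int.ModEq.refl _)
      have hWpA' : Module.End.eigenspace (LieAlgebra.ad ℂ g x) (((p : ℤ) - N : ℤ) : ℂ) ≤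
          Module.End.eigenspace A (ω ^ p) := Wle' _ p (hmZ _ _ ⟨1, by ring⟩)
      have hWqA : Module.End.eigenspace (LieAlgebra.ad ℂ g x) ((q : ℤ) : ℂ) ≤
          Module.End.eigenspace A (ω ^ q) := Wle' _ q (Int.ModEq.refl _)
      have hWqA' : Module.End.eigenspace (LieAlgebra.ad ℂ g x) (((q : ℤ) - N : ℤ) : ℂ) ≤
          Module.End.eigenspace A (ω ^ q) := Wle' _ q (hmZ _ _ ⟨1, by ring⟩)
      apply sup_le
      · rcases hm0 with rfl | rfl
        · -- r = p + q
          have hb := hbr (p : ℤ) (q : ℤ) (by omega) (by omega) (by omega)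
            (abs_le.mpr ⟨by omega, by omega⟩) (abs_le.mpr ⟨by omega, by omega⟩)
            (abs_le.mpr ⟨by omega, by omega⟩)
          rw [show (p : ℤ) + (q : ℤ) = (r : ℤ) from by omega] at hb
          rw [← hb]
          exact bracketSpan_mono hWpA hWqA
        · -- r = p + q - N
          have hb := hbr ((p : ℤ) - N) (q : ℤ) (by omega) (by omega) (by omega)
            (abs_le.mpr ⟨by omega, by omega⟩) (abs_le.mpr ⟨by omega, by omega⟩)
            (abs_le.mpr ⟨by omega, by omega⟩)
          rw [show (p : ℤ) - N + (q : ℤ) = (r : ℤ) from by omega] at hb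
          rw [← hb]
          exact bracketSpan_mono hWpA' hWqA
      · rcases hm0 with rfl | rfl
        · -- r - N = (p - N) + q
          have hb := hbr ((p : ℤ) - N) (q : ℤ) (by omega) (by omega) (by omega)
            (abs_le.mpr ⟨by omega, by omega⟩) (abs_le.mpr ⟨by omega, by omega⟩)
            (abs_le.mpr ⟨by omega, by omega⟩)
          rw [show (p : ℤ) - N + (q : ℤ) = (r : ℤ) - N from by omega] at hb
          rw [← hb]
          exact bracketSpan_mono hWpA' hWqA
        · -- r - N = (p - N) + (q - N)
          have hb := hbr ((p : ℤ) - N) ((q : ℤ) - N) (by omega) (by omega) (by omega)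
            (abs_le.mpr ⟨by omega, by omega⟩) (abs_le.mpr ⟨by omega, by omega⟩)
            (abs_le.mpr ⟨by omega, by omega⟩)
          rw [show (p : ℤ) - N + ((q : ℤ) - N) = (r : ℤ) - N from by omega] at hb
          rw [← hb]
          exact bracketSpan_mono hWpA' hWqA'
end

section
/- If n_j(ψ) is prime, then g^{a_j} is a maximal proper subalgebra of g: any subalgebra g_0 with g^{a_j} ⊆ g_0 ⊆ g and g_0 ≠ g^{a_j} equals g. -/
open LieAlgebra Complex
open scoped DirectSum

variable {g : Type*} [LieRing g] [LieAlgebra ℂ g] [Module.Finite ℂ g]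

/-- If `N = n_j(ψ)` is prime then the fixed-point subalgebra
`g^{a_j}` of `A = Ad(a_j)` is a maximal proper subalgebra of `g`: any subalgebra `g₀`
with `g^{a_j} ⊆ g₀ ⊆ g` and `g₀ ≠ g^{a_j}` equals `g`.  Here `ω = e^{2πi/N}`, the
Killing orthocomplement `r[j]` of `g^{a_j}` decomposes as the direct sum of the
`Ad(a_j)`-eigenspaces `g[a_j]^k = {z | A z = ω^k z}` (`k = 1, …, N-1`), each
irreducible under `ad g^{a_j}`, with `[g[a_j]^p, g[a_j]^q] = g[a_j]^{p+q mod N}`. -/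
theorem fixed_subalgebra_maximal_of_prime [LieAlgebra.IsSimple ℂ g]
    (x : g) (N : ℕ) (hprime : Nat.Prime N)
    -- `A = Ad(a_j)` for `a_j = exp(2πi x / N)`: a Lie algebra automorphism
    (A : Module.End ℂ g)
    (hAlie : ∀ z w : g, A ⁅z, w⁆ = ⁅A z, A w⁆)
    (hA : ∀ (c : ℂ) (z : g), ⁅x, z⁆ = c • z →
      A z = Complex.exp (2 * Real.pi * Complex.I * c / N) • z)
    -- `g` decomposes into the `Ad(a_j)`-eigenspaces for the `N`-th roots of unity
    (hsupA : ⨆ k : Fin N,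
      Module.End.eigenspace A (Complex.exp (2 * Real.pi * Complex.I / N) ^ (k : ℕ)) = ⊤)
    -- the fixed-point subalgebra `g^{a_j}`
    (gA : LieSubalgebra ℂ g) (hgA : ∀ z : g, z ∈ gA ↔ A z = z)
    -- each `g[a_j]^k`, `k = 1, …, N-1`, is a nonzero irreducible `ad g^{a_j}`-module
    (hirr : ∀ k : ℕ, 1 ≤ k → k ≤ N - 1 →
      IsIrreducibleUnder gA.toSubmodule
        (Module.End.eigenspace A (Complex.exp (2 * Real.pi * Complex.I / N) ^ k)))
    -- the bracket relations among the eigenspaces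
    (hbr : ∀ p q r : ℕ, 1 ≤ p → p ≤ N - 1 → 1 ≤ q → q ≤ N - 1 → 1 ≤ r → r ≤ N - 1 →
      (r : ℤ) ≡ (p : ℤ) + (q : ℤ) [ZMOD (N : ℤ)] →
      bracketSpan
          (Module.End.eigenspace A (Complex.exp (2 * Real.pi * Complex.I / N) ^ p))
          (Module.End.eigenspace A (Complex.exp (2 * Real.pi * Complex.I / N) ^ q)) =
        Module.End.eigenspace A (Complex.exp (2 * Real.pi * Complex.I / N) ^ r)) :
    ∀ g₀ : LieSubalgebra ℂ g, gA ≤ g₀ → g₀ ≠ gA → g₀ = ⊤ := by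
  intro g₀ hle hne
  classical
  haveI : NeZero N := ⟨hprime.ne_zero⟩
  have hN1 : 1 < N := hprime.one_lt
  have hNpos : 0 < N := hprime.pos
  set ω : ℂ := Complex.exp (2 * Real.pi * Complex.I / N) with hωdef
  have hprim : IsPrimitiveRoot ω N := Complex.isPrimitiveRoot_exp N hprime.ne_zero
  set E : Fin N → Submodule ℂ g :=
    fun k => Module.End.eigenspace A (ω ^ (k : ℕ)) with hEdef
  have hsup : ⨆ k : Fin N, E k = ⊤ := hsupA
  have hinj : Function.Injective (fun k : Fin N => ω ^ (k : ℕ)) := by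
    intro i j h
    exact Fin.ext (hprim.pow_inj i.isLt j.isLt h)
  have hind : iSupIndep E := (Module.End.eigenspaces_iSupIndep A).comp hinj
  have internal : DirectSum.IsInternal E :=
    DirectSum.isInternal_submodule_of_iSupIndep_of_iSup_eq_top hind hsup
  set e : (⨁ k : Fin N, E k) ≃ₗ[ℂ] g :=
    LinearEquiv.ofBijective (DirectSum.coeLinearMap E) internal with hedef
  set π : Fin N → (g →ₗ[ℂ] g) := fun k =>
    (E k).subtype ∘ₗ (DirectSum.component ℂ (Fin N) (fun k => E k) k) ∘ₗ
      (e.symm : g →ₗ[ℂ] ⨁ k : Fin N, E k) with hπdef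
  have hπapply : ∀ (k : Fin N) (z : g), π k z = ((e.symm z) k : g) := fun k z => rfl
  have hπmem : ∀ (k : Fin N) (z : g), π k z ∈ E k := fun k z => ((e.symm z) k).2
  have hπ_same : ∀ (k : Fin N), ∀ w ∈ E k, π k w = w := by
    intro k w hw
    exact congrArg Subtype.val (internal.ofBijective_coeLinearMap_of_mem hw)
  have hπ_ne : ∀ (j k : Fin N), j ≠ k → ∀ w ∈ E j, π k w = 0 := by
    intro j k hjk w hw
    exact congrArg Subtype.val (internal.ofBijective_coeLinearMap_of_mem_ne hjk hw)
  have hsum : ∀ z : g, ∑ k : Fin N, π k z = z := by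
    intro z
    have h2 : ∑ k : Fin N, DirectSum.of (fun k : Fin N => E k) k ((e.symm z) k) = e.symm z :=
      DirectSum.sum_univ_of (e.symm z)
    have h3 := congrArg (DirectSum.coeLinearMap E) h2
    rw [map_sum] at h3
    calc ∑ k : Fin N, π k z
        = ∑ k : Fin N,
            DirectSum.coeLinearMap E (DirectSum.of (fun k : Fin N => E k) k ((e.symm z) k)) := by
          refine Finset.sum_congr rfl fun k _ => ?_
          rw [DirectSum.coeLinearMap_of]
          exact hπapply k z
      _ = DirectSum.coeLinearMap E (e.symm z) := h3
      _ = z := e.apply_symm_apply z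
  have hπ_comb : ∀ (w : Fin N → g), (∀ j, w j ∈ E j) →
      ∀ k : Fin N, π k (∑ j : Fin N, w j) = w k := by
    intro w hw k
    rw [map_sum, Finset.sum_eq_single_of_mem k (Finset.mem_univ k)
      (fun j _ hj => hπ_ne j k hj (w j) (hw j))]
    exact hπ_same k (w k) (hw k)
  have hgA_E0 : ∀ z : g, z ∈ E 0 ↔ z ∈ gA := by
    intro z
    rw [hgA]
    constructor
    · intro hz
      have h := Module.End.mem_eigenspace_iff.mp hz
      simpa using h
    · intro hz
      apply Module.End.mem_eigenspace_iff.mpr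
      simpa using hz
  have hEinv : ∀ u ∈ gA, ∀ (j : Fin N), ∀ w ∈ E j, ⁅u, w⁆ ∈ E j := by
    intro u hu j w hw
    by_cases hj : j = 0
    · subst hj
      rw [hgA_E0] at hw ⊢
      exact gA.lie_mem hu hw
    · have h1 : 1 ≤ (j : ℕ) := Nat.one_le_iff_ne_zero.mpr (fun h => hj (Fin.ext h))
      have h2 : (j : ℕ) ≤ N - 1 := by have := j.isLt; omega
      exact (hirr (j : ℕ) h1 h2).2.1 u hu w hw
  have hπlie : ∀ u ∈ gA, ∀ (k : Fin N) (z : g), π k ⁅u, z⁆ = ⁅u, π k z⁆ := by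
    intro u hu k z
    conv_lhs => rw [← hsum z]
    rw [show ⁅u, ∑ j : Fin N, π j z⁆ = ∑ j : Fin N, ⁅u, π j z⁆ by
      have hms := map_sum (LieAlgebra.ad ℂ g u) (fun j => π j z) Finset.univ
      simp only [LieAlgebra.ad_apply] at hms
      exact hms]
    exact hπ_comb (fun j => ⁅u, π j z⁆) (fun j => hEinv u hu j (π j z) (hπmem j z)) k
  set supp : g → Finset (Fin N) :=
    fun z => Finset.univ.filter (fun k : Fin N => π k z ≠ 0 ∧ k ≠ 0) with hsuppdef
  have hsupp_mem : ∀ (z : g) (k : Fin N), k ∈ supp z ↔ (π k z ≠ 0 ∧ k ≠ 0) := by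
    intro z k
    simp [hsuppdef]
  have hnotmem : ∀ (z : g) (k : Fin N), k ∉ supp z → k ≠ 0 → π k z = 0 := by
    intro z k hk hk0
    by_contra h
    exact hk ((hsupp_mem z k).mpr ⟨h, hk0⟩)
  -- pick an element of `g₀ \ gA` of minimal support
  have hexy : ∃ y, y ∈ g₀ ∧ y ∉ gA := by
    by_contra h
    push_neg at h
    exact hne (le_antisymm (fun z hz => h z hz) hle)
  have hex : ∃ n : ℕ, ∃ z : g, (z ∈ g₀ ∧ z ∉ gA) ∧ (supp z).card = n := by
    obtain ⟨y, hy1, hy2⟩ := hexy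
    exact ⟨(supp y).card, y, ⟨hy1, hy2⟩, rfl⟩
  obtain ⟨y, ⟨hy₀, hynA⟩, hycard⟩ := Nat.find_spec hex
  have hmin : ∀ z : g, z ∈ g₀ → z ∉ gA → Nat.find hex ≤ (supp z).card := by
    intro z h1 h2
    exact Nat.find_min' hex ⟨z, ⟨h1, h2⟩, rfl⟩
  have hyne : (supp y).Nonempty := by
    rw [Finset.nonempty_iff_ne_empty]
    intro hemp
    apply hynA
    have hy0 : ∀ k : Fin N, k ≠ 0 → π k y = 0 := by
      intro k hk
      apply hnotmem y k _ hk
      rw [hemp]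
      exact Finset.notMem_empty k
    have hyeq : y = π 0 y := by
      conv_lhs => rw [← hsum y]
      exact Finset.sum_eq_single_of_mem 0 (Finset.mem_univ 0) (fun b _ hb => hy0 b hb)
    rw [hyeq]
    exact (hgA_E0 _).mp (hπmem 0 y)
  obtain ⟨p, hpmem⟩ := hyne
  have hpy : π p y ≠ 0 ∧ p ≠ 0 := (hsupp_mem y p).1 hpmem
  have hp1 : 1 ≤ (p : ℕ) := Nat.one_le_iff_ne_zero.mpr (fun h => hpy.2 (Fin.ext h))
  have hp2 : (p : ℕ) ≤ N - 1 := by have := p.isLt; omega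
  have hEp_irr := hirr (p : ℕ) hp1 hp2
  -- main step: produce a nonzero element of `E p ∩ g₀`
  have hpure : ∃ w : g, w ≠ 0 ∧ w ∈ E p ∧ w ∈ g₀ := by
    rcases Nat.lt_or_ge (supp y).card 2 with hlt | hge
    · -- minimal support has exactly one element
      have hothers : ∀ k : Fin N, k ≠ 0 → k ≠ p → π k y = 0 := by
        intro k hk0 hkp
        apply hnotmem y k _ hk0
        intro hkmem
        have h2 : 2 ≤ (supp y).card := Finset.one_lt_card.mpr ⟨k, hkmem, p, hpmem, hkp⟩
        omega
      have h0p : (0 : Fin N) ≠ p := fun h => hpy.2 h.symm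
      have hsub : ∑ k ∈ ({0, p} : Finset (Fin N)), π k y = ∑ k : Fin N, π k y :=
        Finset.sum_subset (Finset.subset_univ _) (fun k _ hk => by
          simp only [Finset.mem_insert, Finset.mem_singleton, not_or] at hk
          exact hothers k hk.1 hk.2)
      have hyeq : y = π 0 y + π p y := by
        conv_lhs => rw [← hsum y]
        rw [← hsub, Finset.sum_pair h0p]
      have hw : y - π 0 y = π p y := sub_eq_of_eq_add' hyeq
      refine ⟨y - π 0 y, ?_, ?_, ?_⟩
      · rw [hw]; exact hpy.1
      · rw [hw]; exact hπmem p y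
      · exact g₀.toSubmodule.sub_mem hy₀ (hle ((hgA_E0 _).mp (hπmem 0 y)))
    · -- at least two elements in the support: contradiction
      exfalso
      obtain ⟨q, hqmem, hqp⟩ := Finset.exists_mem_ne hge p
      have hqy : π q y ≠ 0 ∧ q ≠ 0 := (hsupp_mem y q).1 hqmem
      set M₀ : Submodule ℂ g :=
        { carrier := {z | z ∈ g₀ ∧ ∀ k : Fin N, k ≠ 0 → k ∉ supp y → π k z = 0}
          add_mem' := by
            rintro a b ⟨ha1, ha2⟩ ⟨hb1, hb2⟩
            exact ⟨g₀.toSubmodule.add_mem ha1 hb1,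
              fun k h1 h2 => by rw [map_add, ha2 k h1 h2, hb2 k h1 h2, add_zero]⟩
          zero_mem' := ⟨g₀.toSubmodule.zero_mem, fun k _ _ => map_zero _⟩
          smul_mem' := by
            rintro c a ⟨ha1, ha2⟩
            exact ⟨g₀.toSubmodule.smul_mem c ha1,
              fun k h1 h2 => by rw [map_smul, ha2 k h1 h2, smul_zero]⟩ } with hM₀def
      have hM₀mem : ∀ z : g,
          z ∈ M₀ ↔ (z ∈ g₀ ∧ ∀ k : Fin N, k ≠ 0 → k ∉ supp y → π k z = 0) :=
        fun z => Iff.rfl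
      have hyM₀ : y ∈ M₀ := ⟨hy₀, fun k h1 h2 => hnotmem y k h2 h1⟩
      have hM₀lie : ∀ u ∈ gA, ∀ z ∈ M₀, ⁅u, z⁆ ∈ M₀ := by
        rintro u hu z ⟨hz1, hz2⟩
        refine ⟨g₀.lie_mem (hle hu) hz1, fun k h1 h2 => ?_⟩
        rw [hπlie u hu k z, hz2 k h1 h2, lie_zero]
      have key0 : ∀ z ∈ M₀, π p z = 0 → ∀ k : Fin N, k ≠ 0 → π k z = 0 := by
        rintro z ⟨hz1, hz2⟩ hzp k hk0
        have hz0gA : π 0 z ∈ gA := (hgA_E0 _).mp (hπmem 0 z)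
        have hz' : z - π 0 z ∈ g₀ := g₀.toSubmodule.sub_mem hz1 (hle hz0gA)
        have hπz' : ∀ j : Fin N, j ≠ 0 → π j (z - π 0 z) = π j z := by
          intro j hj
          rw [map_sub, hπ_ne 0 j (fun h => hj h.symm) (π 0 z) (hπmem 0 z), sub_zero]
        have hzgA : z - π 0 z ∈ gA := by
          by_contra hcon
          have h1 := hmin (z - π 0 z) hz' hcon
          have h2 : supp (z - π 0 z) ⊆ (supp y).erase p := by
            intro k' hk'
            have hk'' := (hsupp_mem _ k').1 hk'
            rw [Finset.mem_erase]
            have hπk' : π k' z ≠ 0 := by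
              rw [← hπz' k' hk''.2]
              exact hk''.1
            refine ⟨?_, ?_⟩
            · intro h
              apply hπk'
              rw [h]
              exact hzp
            · by_contra hns
              exact hπk' (hz2 k' hk''.2 hns)
          have h3 : (supp (z - π 0 z)).card ≤ (supp y).card - 1 := by
            calc (supp (z - π 0 z)).card ≤ ((supp y).erase p).card := Finset.card_le_card h2
              _ = (supp y).card - 1 := Finset.card_erase_of_mem hpmem
          have h4 : 1 ≤ (supp y).card := Finset.card_pos.mpr ⟨p, hpmem⟩
          omega
        rw [← hπz' k hk0]
        exact hπ_ne 0 k (fun h => hk0 h.symm) _ ((hgA_E0 _).mpr hzgA)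
      have hsurj : ∀ v ∈ E p, ∃ z, z ∈ M₀ ∧ π p z = v := by
        intro v hv
        have hle1 : M₀.map (π p) ≤ Module.End.eigenspace A (ω ^ (p : ℕ)) := by
          intro w hw
          obtain ⟨z, hz, rfl⟩ := Submodule.mem_map.mp hw
          exact hπmem p z
        have hinv1 : ∀ u ∈ gA.toSubmodule, ∀ w ∈ M₀.map (π p), ⁅u, w⁆ ∈ M₀.map (π p) := by
          intro u hu w hw
          obtain ⟨z, hz, rfl⟩ := Submodule.mem_map.mp hw
          exact Submodule.mem_map.mpr ⟨⁅u, z⁆, hM₀lie u hu z hz, hπlie u hu p z⟩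
        rcases hEp_irr.2.2 (M₀.map (π p)) hle1 hinv1 with hbot | htop
        · exfalso
          have h5 : π p y ∈ M₀.map (π p) := Submodule.mem_map_of_mem hyM₀
          rw [hbot] at h5
          exact hpy.1 ((Submodule.mem_bot ℂ).mp h5)
        · have hv' : v ∈ Module.End.eigenspace A (ω ^ (p : ℕ)) := hv
          rw [← htop] at hv'
          obtain ⟨z, hz, hzeq⟩ := Submodule.mem_map.mp hv'
          exact ⟨z, hz, hzeq⟩
      set V : Submodule ℂ g :=
        { carrier := {v | v ∈ E p ∧ ∀ z ∈ M₀, π p z = v → π q z = 0}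
          zero_mem' := ⟨(E p).zero_mem, fun z hz hzp => key0 z hz hzp q hqy.2⟩
          add_mem' := by
            rintro a b ⟨haE, ha⟩ ⟨hbE, hb⟩
            refine ⟨(E p).add_mem haE hbE, ?_⟩
            intro z hz hzp
            obtain ⟨za, hza, hzap⟩ := hsurj a haE
            have h1 : z - za ∈ M₀ := M₀.sub_mem hz hza
            have h2 : π p (z - za) = b := by
              rw [map_sub, hzp, hzap, add_sub_cancel_left]
            have h3 := hb (z - za) h1 h2
            rw [map_sub] at h3
            have h4 := ha za hza hzap
            rw [h4, sub_zero] at h3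
            exact h3
          smul_mem' := by
            rintro c a ⟨haE, ha⟩
            refine ⟨(E p).smul_mem c haE, ?_⟩
            intro z hz hzp
            by_cases hc : c = 0
            · subst hc
              rw [zero_smul] at hzp
              exact key0 z hz hzp q hqy.2
            · have h1 : c⁻¹ • z ∈ M₀ := M₀.smul_mem _ hz
              have h2 : π p (c⁻¹ • z) = a := by
                rw [map_smul, hzp, smul_smul, inv_mul_cancel₀ hc, one_smul]
              have h3 := ha _ h1 h2
              rw [map_smul, smul_eq_zero] at h3
              rcases h3 with h | h
              · exact absurd h (inv_ne_zero hc)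
              · exact h } with hVdef
      have hVle : V ≤ Module.End.eigenspace A (ω ^ (p : ℕ)) := fun v hv => hv.1
      have hVinv : ∀ u ∈ gA.toSubmodule, ∀ v ∈ V, ⁅u, v⁆ ∈ V := by
        intro u hu v hv
        obtain ⟨hvE, hvprop⟩ := hv
        refine ⟨hEinv u hu p v hvE, ?_⟩
        intro z hz hzp
        obtain ⟨zv, hzv, hzvp⟩ := hsurj v hvE
        have h1 : ⁅u, zv⁆ ∈ M₀ := hM₀lie u hu zv hzv
        have h2 : π p ⁅u, zv⁆ = ⁅u, v⁆ := by rw [hπlie u hu p zv, hzvp]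
        have h3 : z - ⁅u, zv⁆ ∈ M₀ := M₀.sub_mem hz h1
        have h4 : π p (z - ⁅u, zv⁆) = 0 := by rw [map_sub, hzp, h2, sub_self]
        have h5 := key0 _ h3 h4 q hqy.2
        rw [map_sub] at h5
        have h6 : π q ⁅u, zv⁆ = 0 := by
          rw [hπlie u hu q zv, hvprop zv hzv hzvp, lie_zero]
        rw [h6, sub_zero] at h5
        exact h5
      have hVbot : V = ⊥ := by
        rcases hEp_irr.2.2 V hVle hVinv with h | h
        · exact h
        · exfalso
          have h7 : π p y ∈ V := by
            rw [h]
            exact hπmem p y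
          exact hqy.1 (h7.2 y hyM₀ rfl)
      have hxgA : x ∈ gA := by
        apply (hgA x).mpr
        have h0 : ⁅x, x⁆ = (0 : ℂ) • x := by rw [lie_self, zero_smul]
        have h1 := hA 0 x h0
        simpa using h1
      haveI : Nontrivial (Module.End.eigenspace A (ω ^ (p : ℕ))) :=
        Submodule.nontrivial_iff_ne_bot.mpr hEp_irr.1
      have hres : ∀ w ∈ Module.End.eigenspace A (ω ^ (p : ℕ)),
          (LieAlgebra.ad ℂ g x) w ∈ Module.End.eigenspace A (ω ^ (p : ℕ)) := by
        intro w hw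
        rw [LieAlgebra.ad_apply]
        exact hEinv x hxgA p w hw
      obtain ⟨c, hc⟩ := Module.End.exists_eigenvalue ((LieAlgebra.ad ℂ g x).restrict hres)
      obtain ⟨ve, hve⟩ := hc.exists_hasEigenvector
      have hvE : (ve : g) ∈ Module.End.eigenspace A (ω ^ (p : ℕ)) := ve.2
      have hv0 : (ve : g) ≠ 0 := fun h => hve.2 (by exact_mod_cast h)
      have hlie_v : ⁅x, (ve : g)⁆ = c • (ve : g) := by
        have h8 := congrArg Subtype.val hve.apply_eq_smul
        rw [LinearMap.restrict_coe_apply] at h8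
        simpa [LieAlgebra.ad_apply] using h8
      have hAv : A (ve : g) = ω ^ (p : ℕ) • (ve : g) := Module.End.mem_eigenspace_iff.mp hvE
      have hAv2 : A (ve : g) = Complex.exp (2 * Real.pi * Complex.I * c / N) • (ve : g) :=
        hA c _ hlie_v
      have hcexp : Complex.exp (2 * Real.pi * Complex.I * c / N) = ω ^ (p : ℕ) :=
        smul_left_injective ℂ hv0 (hAv2.symm.trans hAv)
      have hnall : ¬(∀ z ∈ M₀, π p z = (ve : g) → π q z = 0) := by
        intro hall
        have h9 : (ve : g) ∈ V := ⟨hvE, hall⟩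
        rw [hVbot] at h9
        exact hv0 ((Submodule.mem_bot ℂ).mp h9)
      push_neg at hnall
      obtain ⟨z, hzM, hzp, hzq⟩ := hnall
      have hζ : ⁅x, z⁆ - c • z ∈ M₀ :=
        M₀.sub_mem (hM₀lie x hxgA z hzM) (M₀.smul_mem c hzM)
      have hζp : π p (⁅x, z⁆ - c • z) = 0 := by
        rw [map_sub, map_smul, hπlie x hxgA p z, hzp, hlie_v, sub_self]
      have hζq := key0 _ hζ hζp q hqy.2
      rw [map_sub, map_smul, hπlie x hxgA q z] at hζq
      have hlie_w : ⁅x, π q z⁆ = c • π q z := by rwa [sub_eq_zero] at hζq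
      have hAw : A (π q z) = ω ^ (q : ℕ) • π q z :=
        Module.End.mem_eigenspace_iff.mp (hπmem q z)
      have hAw2 : A (π q z) = Complex.exp (2 * Real.pi * Complex.I * c / N) • π q z :=
        hA c _ hlie_w
      have hωpq : ω ^ (p : ℕ) = ω ^ (q : ℕ) := by
        have h9 := hAw2.symm.trans hAw
        rw [hcexp] at h9
        exact smul_left_injective ℂ hzq h9
      exact hqp (Fin.ext (hprim.pow_inj q.isLt p.isLt hωpq.symm))
  -- now `E p ≤ g₀`
  obtain ⟨w, hw0, hwE, hwg₀⟩ := hpure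
  have hEpg₀ : Module.End.eigenspace A (ω ^ (p : ℕ)) ≤ g₀.toSubmodule := by
    have hUle : g₀.toSubmodule ⊓ Module.End.eigenspace A (ω ^ (p : ℕ)) ≤
        Module.End.eigenspace A (ω ^ (p : ℕ)) := inf_le_right
    have hUinv : ∀ u ∈ gA.toSubmodule,
        ∀ w' ∈ g₀.toSubmodule ⊓ Module.End.eigenspace A (ω ^ (p : ℕ)),
        ⁅u, w'⁆ ∈ g₀.toSubmodule ⊓ Module.End.eigenspace A (ω ^ (p : ℕ)) := by
      intro u hu w' hw'
      obtain ⟨h1, h2⟩ := Submodule.mem_inf.mp hw'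
      exact Submodule.mem_inf.mpr ⟨g₀.lie_mem (hle hu) h1, hEinv u hu p w' h2⟩
    rcases hEp_irr.2.2 _ hUle hUinv with h | h
    · exfalso
      have h1 : w ∈ g₀.toSubmodule ⊓ Module.End.eigenspace A (ω ^ (p : ℕ)) :=
        Submodule.mem_inf.mpr ⟨hwg₀, hwE⟩
      rw [h] at h1
      exact hw0 ((Submodule.mem_bot ℂ).mp h1)
    · rw [← h]
      exact inf_le_left
  -- brackets of subspaces of `g₀` stay in `g₀`
  have hbrle : ∀ U V' : Submodule ℂ g, U ≤ g₀.toSubmodule → V' ≤ g₀.toSubmodule →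
      bracketSpan U V' ≤ g₀.toSubmodule := by
    intro U V' hU hV'
    apply Submodule.span_le.mpr
    rintro z ⟨u, hu, v, hv, rfl⟩
    exact g₀.lie_mem (hU hu) (hV' hv)
  have hnotdvd : ∀ m : ℕ, 1 ≤ m → m ≤ N - 1 → ¬(N ∣ m) := by
    intro m h1 h2 hdvd
    have := Nat.le_of_dvd (by omega) hdvd
    omega
  have hmodne : ∀ m : ℕ, 1 ≤ m → m ≤ N - 1 →
      1 ≤ (m * (p : ℕ)) % N ∧ (m * (p : ℕ)) % N ≤ N - 1 := by
    intro m h1 h2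
    have hlt : (m * (p : ℕ)) % N < N := Nat.mod_lt _ hNpos
    have hne0 : (m * (p : ℕ)) % N ≠ 0 := by
      intro h
      have hdvd : N ∣ m * (p : ℕ) := Nat.dvd_of_mod_eq_zero h
      rcases (Nat.Prime.dvd_mul hprime).mp hdvd with h | h
      · exact hnotdvd m h1 h2 h
      · exact hnotdvd (p : ℕ) hp1 hp2 h
    omega
  have claim : ∀ m : ℕ, 1 ≤ m → m ≤ N - 1 →
      Module.End.eigenspace A (ω ^ ((m * (p : ℕ)) % N)) ≤ g₀.toSubmodule := by
    intro m hm
    induction m, hm using Nat.le_induction with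
    | base =>
      intro _
      have h : (1 * (p : ℕ)) % N = (p : ℕ) := by
        rw [one_mul, Nat.mod_eq_of_lt p.isLt]
      rw [h]
      exact hEpg₀
    | succ n hn IH =>
      intro hsucc
      have hn' : n ≤ N - 1 := by omega
      have IH' := IH hn'
      have hb1 := hmodne n hn hn'
      have hb2 := hmodne (n + 1) (by omega) hsucc
      have hcong : (((n + 1) * (p : ℕ)) % N : ℤ) ≡
          ((n * (p : ℕ)) % N : ℤ) + ((p : ℕ) : ℤ) [ZMOD (N : ℤ)] := by
        have e1 : ((((n + 1) * (p : ℕ)) % N : ℕ) : ℤ) ≡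
            (((n + 1) * (p : ℕ) : ℕ) : ℤ) [ZMOD (N : ℤ)] := by
          rw [Int.natCast_mod]
          exact Int.mod_modEq _ _
        have e2 : (((n * (p : ℕ)) % N : ℕ) : ℤ) + ((p : ℕ) : ℤ) ≡
            ((n * (p : ℕ) : ℕ) : ℤ) + ((p : ℕ) : ℤ) [ZMOD (N : ℤ)] := by
          apply Int.ModEq.add_right
          rw [Int.natCast_mod]
          exact Int.mod_modEq _ _
        refine e1.trans (Int.ModEq.trans ?_ e2.symm)
        have : (((n + 1) * (p : ℕ) : ℕ) : ℤ) = ((n * (p : ℕ) : ℕ) : ℤ) + ((p : ℕ) : ℤ) := by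
          push_cast
          ring
        rw [this]
      have hbreq := hbr ((n * (p : ℕ)) % N) (p : ℕ) (((n + 1) * (p : ℕ)) % N)
        hb1.1 hb1.2 hp1 hp2 hb2.1 hb2.2 hcong
      rw [← hbreq]
      exact hbrle _ _ IH' hEpg₀
  have hcover : ∀ k : Fin N, E k ≤ g₀.toSubmodule := by
    intro k
    by_cases hk : k = 0
    · subst hk
      intro z hz
      exact hle ((hgA_E0 z).mp hz)
    · have hk1 : 1 ≤ (k : ℕ) := Nat.one_le_iff_ne_zero.mpr (fun h => hk (Fin.ext h))
      have hkN : (k : ℕ) < N := k.isLt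
      have hpz : (((p : ℕ) : ZMod N)) ≠ 0 := by
        rw [Ne, ZMod.natCast_eq_zero_iff]
        exact hnotdvd (p : ℕ) hp1 hp2
      have hkz : (((k : ℕ) : ZMod N)) ≠ 0 := by
        rw [Ne, ZMod.natCast_eq_zero_iff]
        exact hnotdvd (k : ℕ) hk1 (by omega)
      set u : ZMod N := ((k : ℕ) : ZMod N) * (((p : ℕ) : ZMod N))⁻¹ with hudef
      haveI : Fact (Nat.Prime N) := ⟨hprime⟩
      have hu0 : u ≠ 0 := mul_ne_zero hkz (inv_ne_zero hpz)
      have hm1 : 1 ≤ u.val := by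
        rcases Nat.eq_zero_or_pos u.val with h | h
        · exact absurd ((ZMod.val_eq_zero u).mp h) hu0
        · exact h
      have hm2 : u.val ≤ N - 1 := by
        have := ZMod.val_lt u
        omega
      have hmp : (u.val * (p : ℕ)) % N = (k : ℕ) := by
        have hcast : (((u.val * (p : ℕ)) % N : ℕ) : ZMod N) = (((k : ℕ) : ℕ) : ZMod N) := by
          rw [ZMod.natCast_mod]
          push_cast
          rw [ZMod.natCast_rightInverse u, hudef, mul_assoc, inv_mul_cancel₀ hpz, mul_one]
        have hmeq := (ZMod.natCast_eq_natCast_iff _ _ _).mp hcast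
        unfold Nat.ModEq at hmeq
        rwa [Nat.mod_eq_of_lt (Nat.mod_lt _ hNpos), Nat.mod_eq_of_lt hkN] at hmeq
      have hclaim := claim u.val hm1 hm2
      rw [hmp] at hclaim
      exact hclaim
  have htop : g₀.toSubmodule = ⊤ := by
    rw [eq_top_iff, ← hsup]
    exact iSup_le hcover
  ext z
  simp only [LieSubalgebra.mem_top, iff_true]
  have hz : z ∈ g₀.toSubmodule := by
    rw [htop]
    exact Submodule.mem_top
  exact hz
end
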